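/- (Construction of optimal pairs) Let {ψ(θ,S), θ,S ∈ T_0} be a biadmissible family of nonnegative integrable random variables, and define u_1, u_2, φ, u, v as in the reduction theorem. Fix S ∈ T_0. Suppose θ* ∈ T_S is optimal for u(S), i.e. u(S) = E[φ(θ*) | F_S] a.s., and θ*_1, θ*_2 ∈ T_{θ*} satisfy u_1(θ*) = E[ψ(θ*_1, θ*) | F_{θ*}] a.s. and u_2(θ*) = E[ψ(θ*, θ*_2) | F_{θ*}] a.s. Let B = {u_1(θ*) ≤ u_2(θ*)} and define τ*_1 = θ* 1_B + θ*_1 1_{B^c} and τ*_2 = θ*_2 1_B + θ* 1_{B^c}. Then τ*_1, τ*_2 are stopping times in T_S and v(S) = E[ψ(τ*_1, τ*_2) | F_S] a.s., so (τ*_1, τ*_2) is an optimal pair for v(S). -/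

import Mathlib

open MeasureTheory Filter Set Topology

variable {Ω : Type*}

/-- `τ` belongs to `T_0`: it is a stopping time of `𝓕` with values in `[0, T]`. -/
def MemT0 {m0 : MeasurableSpace Ω} (𝓕 : MeasureTheory.Filtration ℝ m0) (T : ℝ)
    (τ : Ω → ℝ) : Prop :=
  MeasureTheory.IsStoppingTime 𝓕 (fun ω => (τ ω : WithTop ℝ)) ∧ ∀ ω, τ ω ∈ Set.Icc (0 : ℝ) T

/-- `v` is an essential supremum of the family `f i`, `i` ranging over `{i | P i}`:
it dominates every member a.s. and is a.s. below any other a.s. upper bound. -/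
def IsEssSupFam {m0 : MeasurableSpace Ω} (μ : MeasureTheory.Measure Ω) {ι : Sort*}
    (P : ι → Prop) (f : ι → Ω → ℝ) (v : Ω → ℝ) : Prop :=
  (∀ i, P i → f i ≤ᵐ[μ] v) ∧ ∀ w : Ω → ℝ, (∀ i, P i → f i ≤ᵐ[μ] w) → v ≤ᵐ[μ] w

/-- `v` is an essential infimum of the family `f i`, `i` ranging over `{i | P i}`. -/
def IsEssInfFam {m0 : MeasurableSpace Ω} (μ : MeasureTheory.Measure Ω) {ι : Sort*}
    (P : ι → Prop) (f : ι → Ω → ℝ) (v : Ω → ℝ) : Prop :=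
  (∀ i, P i → v ≤ᵐ[μ] f i) ∧ ∀ w : Ω → ℝ, (∀ i, P i → w ≤ᵐ[μ] f i) → w ≤ᵐ[μ] v

/-- An admissible family of nonnegative random variables indexed by the stopping
times in `T_0`: `φ τ` is a nonnegative `F_τ`-measurable random variable, and
`φ τ = φ τ'` a.s. on `{τ = τ'}`. -/
def Admissible {m0 : MeasurableSpace Ω} (𝓕 : MeasureTheory.Filtration ℝ m0) (T : ℝ)
    (μ : MeasureTheory.Measure Ω) (φ : (Ω → ℝ) → Ω → ℝ) : Prop :=
  (∀ τ (hτ : MemT0 𝓕 T τ),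
      Measurable[hτ.1.measurableSpace] (φ τ) ∧ ∀ ω, 0 ≤ φ τ ω) ∧
  ∀ τ τ', MemT0 𝓕 T τ → MemT0 𝓕 T τ' →
    ∀ᵐ ω ∂μ, τ ω = τ' ω → φ τ ω = φ τ' ω

/-- An a.e. variant of admissibility (for families defined only up to a.s. equality,
such as value-function families): `φ τ` is a.s. nonnegative and a.s. equal to some
`F_τ`-measurable random variable, and `φ τ = φ τ'` a.s. on `{τ = τ'}`. -/
def AdmissibleAE {m0 : MeasurableSpace Ω} (𝓕 : MeasureTheory.Filtration ℝ m0) (T : ℝ)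
    (μ : MeasureTheory.Measure Ω) (φ : (Ω → ℝ) → Ω → ℝ) : Prop :=
  (∀ τ (hτ : MemT0 𝓕 T τ),
      (∀ᵐ ω ∂μ, 0 ≤ φ τ ω) ∧
      ∃ w : Ω → ℝ, Measurable[hτ.1.measurableSpace] w ∧ φ τ =ᵐ[μ] w) ∧
  ∀ τ τ', MemT0 𝓕 T τ → MemT0 𝓕 T τ' →
    ∀ᵐ ω ∂μ, τ ω = τ' ω → φ τ ω = φ τ' ω

/-- A biadmissible family: `ψ τ S` is a nonnegative `F_{τ ∨ S}`-measurable random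
variable, and `ψ τ S = ψ τ' S'` a.s. on `{τ = τ'} ∩ {S = S'}`. -/
def Biadmissible {m0 : MeasurableSpace Ω} (𝓕 : MeasureTheory.Filtration ℝ m0) (T : ℝ)
    (μ : MeasureTheory.Measure Ω) (ψ : (Ω → ℝ) → (Ω → ℝ) → Ω → ℝ) : Prop :=
  (∀ τ S (hτ : MemT0 𝓕 T τ) (hS : MemT0 𝓕 T S),
      Measurable[(hτ.1.max hS.1).measurableSpace] (ψ τ S) ∧ ∀ ω, 0 ≤ ψ τ S ω) ∧
  ∀ τ τ' S S', MemT0 𝓕 T τ → MemT0 𝓕 T τ' → MemT0 𝓕 T S → MemT0 𝓕 T S' →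
    ∀ᵐ ω ∂μ, τ ω = τ' ω → S ω = S' ω → ψ τ S ω = ψ τ' S' ω

/-- `θn ↓ θ` a.s.: the sequence is a.s. nonincreasing and converges a.s. to `θ`. -/
def DownAS {m0 : MeasurableSpace Ω} (μ : MeasureTheory.Measure Ω)
    (θn : ℕ → Ω → ℝ) (θ : Ω → ℝ) : Prop :=
  ∀ᵐ ω ∂μ, (∀ n, θn (n + 1) ω ≤ θn n ω) ∧
    Filter.Tendsto (fun n => θn n ω) Filter.atTop (nhds (θ ω))

/-- `θn ↑ θ` a.s.: the sequence is a.s. nondecreasing and converges a.s. to `θ`. -/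
def UpAS {m0 : MeasurableSpace Ω} (μ : MeasureTheory.Measure Ω)
    (θn : ℕ → Ω → ℝ) (θ : Ω → ℝ) : Prop :=
  ∀ᵐ ω ∂μ, (∀ n, θn n ω ≤ θn (n + 1) ω) ∧
    Filter.Tendsto (fun n => θn n ω) Filter.atTop (nhds (θ ω))

/-- The family `φ` is right continuous along stopping times in expectation. -/
def RCE {m0 : MeasurableSpace Ω} (𝓕 : MeasureTheory.Filtration ℝ m0) (T : ℝ)
    (μ : MeasureTheory.Measure Ω) (φ : (Ω → ℝ) → Ω → ℝ) : Prop :=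
  ∀ θ, MemT0 𝓕 T θ → ∀ θn : ℕ → Ω → ℝ, (∀ n, MemT0 𝓕 T (θn n)) → DownAS μ θn θ →
    Filter.Tendsto (fun n => ∫ ω, φ (θn n) ω ∂μ) Filter.atTop (nhds (∫ ω, φ θ ω ∂μ))

/-- The family `φ` is left continuous along stopping times in expectation. -/
def LCE {m0 : MeasurableSpace Ω} (𝓕 : MeasureTheory.Filtration ℝ m0) (T : ℝ)
    (μ : MeasureTheory.Measure Ω) (φ : (Ω → ℝ) → Ω → ℝ) : Prop :=
  ∀ θ, MemT0 𝓕 T θ → ∀ θn : ℕ → Ω → ℝ, (∀ n, MemT0 𝓕 T (θn n)) → UpAS μ θn θ →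
    Filter.Tendsto (fun n => ∫ ω, φ (θn n) ω ∂μ) Filter.atTop (nhds (∫ ω, φ θ ω ∂μ))

/-- The biadmissible family `ψ` is uniformly right continuous in expectation along
stopping times: for `S_n ↓ S` a.s. (all in `T_0`), the expectation of the essential
supremum over `θ ∈ T_0` of `|ψ(θ, S) - ψ(θ, S_n)|` (resp. `|ψ(S, θ) - ψ(S_n, θ)|`)
tends to `0`. -/
def URCE {m0 : MeasurableSpace Ω} (𝓕 : MeasureTheory.Filtration ℝ m0) (T : ℝ)
    (μ : MeasureTheory.Measure Ω) (ψ : (Ω → ℝ) → (Ω → ℝ) → Ω → ℝ) : Prop :=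
  ∀ S, MemT0 𝓕 T S → ∀ Sn : ℕ → Ω → ℝ, (∀ n, MemT0 𝓕 T (Sn n)) → DownAS μ Sn S →
    (∀ D : ℕ → Ω → ℝ,
      (∀ n, IsEssSupFam μ (MemT0 𝓕 T) (fun θ ω => |ψ θ S ω - ψ θ (Sn n) ω|) (D n)) →
      Filter.Tendsto (fun n => ∫ ω, D n ω ∂μ) Filter.atTop (nhds 0)) ∧
    ∀ D : ℕ → Ω → ℝ,
      (∀ n, IsEssSupFam μ (MemT0 𝓕 T) (fun θ ω => |ψ S θ ω - ψ (Sn n) θ ω|) (D n)) →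
      Filter.Tendsto (fun n => ∫ ω, D n ω ∂μ) Filter.atTop (nhds 0)

/-- The biadmissible family `ψ` is uniformly left continuous in expectation along
stopping times. -/
def ULCE {m0 : MeasurableSpace Ω} (𝓕 : MeasureTheory.Filtration ℝ m0) (T : ℝ)
    (μ : MeasureTheory.Measure Ω) (ψ : (Ω → ℝ) → (Ω → ℝ) → Ω → ℝ) : Prop :=
  ∀ S, MemT0 𝓕 T S → ∀ Sn : ℕ → Ω → ℝ, (∀ n, MemT0 𝓕 T (Sn n)) → UpAS μ Sn S →
    (∀ D : ℕ → Ω → ℝ,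
      (∀ n, IsEssSupFam μ (MemT0 𝓕 T) (fun θ ω => |ψ θ S ω - ψ θ (Sn n) ω|) (D n)) →
      Filter.Tendsto (fun n => ∫ ω, D n ω ∂μ) Filter.atTop (nhds 0)) ∧
    ∀ D : ℕ → Ω → ℝ,
      (∀ n, IsEssSupFam μ (MemT0 𝓕 T) (fun θ ω => |ψ S θ ω - ψ (Sn n) θ ω|) (D n)) →
      Filter.Tendsto (fun n => ∫ ω, D n ω ∂μ) Filter.atTop (nhds 0)

/-!
Every pair `(τ₁, τ₂)` of stopping times is the pasting, on `B = {τ₁ ≤ τ₂} ∈ F_θ` with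
`θ = τ₁ ∧ τ₂`, of the pairs `(θ, τ₂)` and `(τ₁, θ)`. Biadmissibility lets the conditional
expectation given `F_θ` be computed piece by piece, so
`E[ψ(τ₁, τ₂) | F_θ] = 1_B E[ψ(θ, τ₂) | F_θ] + 1_Bᶜ E[ψ(τ₁, θ) | F_θ] ≤ φ(θ)`, whence `v(S) ≤ u(S)`.
The pair `(τ*₁, τ*₂)` is such a pasting at `θ*`, with optimal pieces on the set where each one
is the larger, so `E[ψ(τ*₁, τ*₂) | F_θ*] = φ(θ*)`; the tower property and the optimality of `θ*`
give `E[ψ(τ*₁, τ*₂) | F_S] = u(S) ≥ v(S)`.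
-/

section Pasting

variable {m0 : MeasurableSpace Ω} {𝓕 : Filtration ℝ m0} {T : ℝ} {μ : Measure Ω}

lemma measurableSet_filtration_of_ae_eq
    (hFnull : ∀ A : Set Ω, μ A = 0 → MeasurableSet[𝓕 0] A) {s s' : Set Ω} (hss' : s =ᵐ[μ] s')
    {t : ℝ} (ht : 0 ≤ t) (hs' : MeasurableSet[𝓕 t] s') : MeasurableSet[𝓕 t] s := by
  rw [← symmDiff_symmDiff_cancel_left s' s]
  exact hs'.symmDiff (𝓕.mono ht _ (hFnull _ (measure_symmDiff_eq_zero_iff.2 hss'.symm)))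

lemma MemT0.measurableSet_inter_le_of_ae_le
    (hFnull : ∀ A : Set Ω, μ A = 0 → MeasurableSet[𝓕 0] A)
    {σ τ : Ω → ℝ} (hσ : MemT0 𝓕 T σ) (hτ : MemT0 𝓕 T τ) (hle : σ ≤ᵐ[μ] τ)
    {A : Set Ω} (hA : MeasurableSet[hσ.1.measurableSpace] A) (t : ℝ) :
    MeasurableSet[𝓕 t] (A ∩ {ω | τ ω ≤ t}) := by
  rcases lt_or_ge t 0 with ht | ht
  · convert @MeasurableSet.empty _ (𝓕 t)
    exact eq_empty_of_forall_notMem fun ω hω => ((hτ.2 ω).1.trans hω.2).not_gt ht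
  · have hτt : MeasurableSet[𝓕 t] {ω | τ ω ≤ t} := by simpa using hτ.1 t
    have hAσ : MeasurableSet[𝓕 t] (A ∩ {ω | σ ω ≤ t}) := by simpa using hA.2 t
    refine measurableSet_filtration_of_ae_eq hFnull ?_ ht (hAσ.inter hτt)
    filter_upwards [hle] with ω hω
    exact propext ⟨fun h => ⟨⟨h.1, hω.trans h.2⟩, h.2⟩, fun h => ⟨h.1.1, h.2⟩⟩

lemma MemT0.measurableSpace_mono_of_ae_le
    (hFnull : ∀ A : Set Ω, μ A = 0 → MeasurableSet[𝓕 0] A)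
    {σ τ : Ω → ℝ} (hσ : MemT0 𝓕 T σ) (hτ : MemT0 𝓕 T τ) (hle : σ ≤ᵐ[μ] τ) :
    hσ.1.measurableSpace ≤ hτ.1.measurableSpace := fun A hA =>
  (hτ.1.measurableSet A).2
    ⟨hA.1, fun t => by simpa using hσ.measurableSet_inter_le_of_ae_le hFnull hτ hle hA t⟩

lemma MemT0.min {τ₁ τ₂ : Ω → ℝ} (hτ₁ : MemT0 𝓕 T τ₁) (hτ₂ : MemT0 𝓕 T τ₂) :
    MemT0 𝓕 T (fun ω => min (τ₁ ω) (τ₂ ω)) :=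
  ⟨hτ₁.1.min hτ₂.1, fun ω =>
    ⟨le_min (hτ₁.2 ω).1 (hτ₂.2 ω).1, (min_le_left _ _).trans (hτ₁.2 ω).2⟩⟩

lemma MemT0.piecewise
    (hFnull : ∀ A : Set Ω, μ A = 0 → MeasurableSet[𝓕 0] A)
    {σ τ₁ τ₂ : Ω → ℝ} (hσ : MemT0 𝓕 T σ) (hτ₁ : MemT0 𝓕 T τ₁) (hτ₂ : MemT0 𝓕 T τ₂)
    (h₁ : σ ≤ᵐ[μ] τ₁) (h₂ : σ ≤ᵐ[μ] τ₂) {B : Set Ω} [DecidablePred (· ∈ B)]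
    (hB : MeasurableSet[hσ.1.measurableSpace] B) :
    MemT0 𝓕 T (B.piecewise τ₁ τ₂) := by
  refine ⟨fun t => ?_, fun ω => ?_⟩
  · have hsplit : {ω | ((B.piecewise τ₁ τ₂ ω : ℝ) : WithTop ℝ) ≤ t} =
        (B ∩ {ω | τ₁ ω ≤ t}) ∪ (Bᶜ ∩ {ω | τ₂ ω ≤ t}) := by
      ext ω
      by_cases hω : ω ∈ B <;> simp [hω]
    rw [hsplit]
    exact (hσ.measurableSet_inter_le_of_ae_le hFnull hτ₁ h₁ hB t).union
      (hσ.measurableSet_inter_le_of_ae_le hFnull hτ₂ h₂ hB.compl t)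
  · by_cases hω : ω ∈ B <;> simp [hω, hτ₁.2 ω, hτ₂.2 ω]

lemma ae_le_piecewise {σ τ₁ τ₂ : Ω → ℝ} (h₁ : σ ≤ᵐ[μ] τ₁) (h₂ : σ ≤ᵐ[μ] τ₂)
    {B : Set Ω} [DecidablePred (· ∈ B)] : σ ≤ᵐ[μ] B.piecewise τ₁ τ₂ := by
  filter_upwards [h₁, h₂] with ω hω₁ hω₂
  by_cases hω : ω ∈ B <;> simp [hω, hω₁, hω₂]

end Pasting

lemma condExp_piecewise {α E : Type*} [NormedAddCommGroup E] [NormedSpace ℝ E] [CompleteSpace E]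
    {m m0 : MeasurableSpace α} {μ : Measure α} {f g : α → E}
    (hf : Integrable f μ) (hg : Integrable g μ) (hm : m ≤ m0)
    {B : Set α} [DecidablePred (· ∈ B)] (hB : MeasurableSet[m] B) :
    μ[B.piecewise f g | m] =ᵐ[μ] B.piecewise (μ[f | m]) (μ[g | m]) := by
  rw [← indicator_add_compl_eq_piecewise, ← indicator_add_compl_eq_piecewise]
  filter_upwards [condExp_add (hf.indicator (hm _ hB)) (hg.indicator (hm _ hB.compl)) m,
    condExp_indicator hf hB, condExp_indicator hg hB.compl] with ω h h₁ h₂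
  rw [h, Pi.add_apply, h₁, h₂, Pi.add_apply]

section Biadmissible

variable {m0 : MeasurableSpace Ω} {𝓕 : Filtration ℝ m0} {T : ℝ} {μ : Measure Ω}
  {ψ : (Ω → ℝ) → (Ω → ℝ) → Ω → ℝ}

lemma Biadmissible.ae_eq_piecewise (hψ : Biadmissible 𝓕 T μ ψ)
    {B : Set Ω} [DecidablePred (· ∈ B)] {a₁ a₂ b₁ b₂ : Ω → ℝ}
    (ha₁ : MemT0 𝓕 T a₁) (ha₂ : MemT0 𝓕 T a₂) (hb₁ : MemT0 𝓕 T b₁) (hb₂ : MemT0 𝓕 T b₂)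
    (ha : MemT0 𝓕 T (B.piecewise a₁ a₂)) (hb : MemT0 𝓕 T (B.piecewise b₁ b₂)) :
    ψ (B.piecewise a₁ a₂) (B.piecewise b₁ b₂) =ᵐ[μ] B.piecewise (ψ a₁ b₁) (ψ a₂ b₂) := by
  filter_upwards [hψ.2 _ _ _ _ ha ha₁ hb hb₁, hψ.2 _ _ _ _ ha ha₂ hb hb₂] with ω h₁ h₂
  by_cases hω : ω ∈ B
  · rw [piecewise_eq_of_mem _ _ _ hω]
    exact h₁ (piecewise_eq_of_mem _ _ _ hω) (piecewise_eq_of_mem _ _ _ hω)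
  · rw [piecewise_eq_of_notMem _ _ _ hω]
    exact h₂ (piecewise_eq_of_notMem _ _ _ hω) (piecewise_eq_of_notMem _ _ _ hω)

lemma Biadmissible.condExp_pasting (hψ : Biadmissible 𝓕 T μ ψ)
    (hFnull : ∀ A : Set Ω, μ A = 0 → MeasurableSet[𝓕 0] A)
    (hψint : ∀ τ₁ τ₂, MemT0 𝓕 T τ₁ → MemT0 𝓕 T τ₂ → Integrable (ψ τ₁ τ₂) μ)
    {θ τ₁ τ₂ : Ω → ℝ} (hθ : MemT0 𝓕 T θ) (hτ₁ : MemT0 𝓕 T τ₁) (hτ₂ : MemT0 𝓕 T τ₂)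
    (h₁ : θ ≤ᵐ[μ] τ₁) (h₂ : θ ≤ᵐ[μ] τ₂) {B : Set Ω} [DecidablePred (· ∈ B)]
    (hB : MeasurableSet[hθ.1.measurableSpace] B) :
    μ[ψ (B.piecewise θ τ₁) (B.piecewise τ₂ θ) | hθ.1.measurableSpace] =ᵐ[μ]
      B.piecewise (μ[ψ θ τ₂ | hθ.1.measurableSpace]) (μ[ψ τ₁ θ | hθ.1.measurableSpace]) :=
  (condExp_congr_ae (hψ.ae_eq_piecewise hθ hτ₁ hτ₂ hθ
      (hθ.piecewise hFnull hθ hτ₁ (EventuallyLE.refl _ _) h₁ hB)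
      (hθ.piecewise hFnull hτ₂ hθ h₂ (EventuallyLE.refl _ _) hB))).trans
    (condExp_piecewise (hψint _ _ hθ hτ₂) (hψint _ _ hτ₁ hθ) hθ.1.measurableSpace_le hB)

lemma Biadmissible.condExp_pasting_eq_max (hψ : Biadmissible 𝓕 T μ ψ)
    (hFnull : ∀ A : Set Ω, μ A = 0 → MeasurableSet[𝓕 0] A)
    (hψint : ∀ τ₁ τ₂, MemT0 𝓕 T τ₁ → MemT0 𝓕 T τ₂ → Integrable (ψ τ₁ τ₂) μ)
    {θ θ₁ θ₂ : Ω → ℝ} (hθ : MemT0 𝓕 T θ) (hθ₁ : MemT0 𝓕 T θ₁) (hθ₂ : MemT0 𝓕 T θ₂)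
    (h₁ : θ ≤ᵐ[μ] θ₁) (h₂ : θ ≤ᵐ[μ] θ₂) {a₁ a₂ : Ω → ℝ}
    (ha₁ : Measurable[hθ.1.measurableSpace] a₁) (ha₂ : Measurable[hθ.1.measurableSpace] a₂)
    (hopt₁ : a₁ =ᵐ[μ] μ[ψ θ₁ θ | hθ.1.measurableSpace])
    (hopt₂ : a₂ =ᵐ[μ] μ[ψ θ θ₂ | hθ.1.measurableSpace]) :
    μ[ψ ({ω | a₁ ω ≤ a₂ ω}.piecewise θ θ₁) ({ω | a₁ ω ≤ a₂ ω}.piecewise θ₂ θ) |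
      hθ.1.measurableSpace] =ᵐ[μ] fun ω => max (a₁ ω) (a₂ ω) := by
  filter_upwards [hψ.condExp_pasting hFnull hψint hθ hθ₁ hθ₂ h₁ h₂ (measurableSet_le ha₁ ha₂),
    hopt₁, hopt₂] with ω h h₁ h₂
  rw [h]
  by_cases hω : ω ∈ {ω | a₁ ω ≤ a₂ ω}
  · rw [piecewise_eq_of_mem _ _ _ hω, ← h₂, max_eq_right hω]
  · rw [piecewise_eq_of_notMem _ _ _ hω, ← h₁, max_eq_left (not_le.1 hω).le]

lemma Biadmissible.condExp_le_of_forall_max_le [IsFiniteMeasure μ] (hψ : Biadmissible 𝓕 T μ ψ)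
    (hFnull : ∀ A : Set Ω, μ A = 0 → MeasurableSet[𝓕 0] A)
    (hψint : ∀ τ₁ τ₂, MemT0 𝓕 T τ₁ → MemT0 𝓕 T τ₂ → Integrable (ψ τ₁ τ₂) μ)
    {u₁ u₂ : (Ω → ℝ) → Ω → ℝ}
    (hu₁ : ∀ θ (hθ : MemT0 𝓕 T θ) τ, MemT0 𝓕 T τ ∧ θ ≤ᵐ[μ] τ →
      μ[ψ τ θ | hθ.1.measurableSpace] ≤ᵐ[μ] u₁ θ)
    (hu₂ : ∀ θ (hθ : MemT0 𝓕 T θ) τ, MemT0 𝓕 T τ ∧ θ ≤ᵐ[μ] τ →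
      μ[ψ θ τ | hθ.1.measurableSpace] ≤ᵐ[μ] u₂ θ)
    (hu₁int : ∀ θ, MemT0 𝓕 T θ → Integrable (u₁ θ) μ)
    (hu₂int : ∀ θ, MemT0 𝓕 T θ → Integrable (u₂ θ) μ)
    {S uS : Ω → ℝ} (hS : MemT0 𝓕 T S)
    (huS : ∀ θ, MemT0 𝓕 T θ ∧ S ≤ᵐ[μ] θ →
      μ[fun ω => max (u₁ θ ω) (u₂ θ ω) | hS.1.measurableSpace] ≤ᵐ[μ] uS)
    {τ₁ τ₂ : Ω → ℝ} (hτ₁ : MemT0 𝓕 T τ₁) (hτ₂ : MemT0 𝓕 T τ₂)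
    (hSτ₁ : S ≤ᵐ[μ] τ₁) (hSτ₂ : S ≤ᵐ[μ] τ₂) :
    μ[ψ τ₁ τ₂ | hS.1.measurableSpace] ≤ᵐ[μ] uS := by
  set θ : Ω → ℝ := fun ω => min (τ₁ ω) (τ₂ ω)
  have hθ : MemT0 𝓕 T θ := hτ₁.min hτ₂
  have hθτ₁ : θ ≤ᵐ[μ] τ₁ := Eventually.of_forall fun ω => min_le_left _ _
  have hθτ₂ : θ ≤ᵐ[μ] τ₂ := Eventually.of_forall fun ω => min_le_right _ _
  have hSθ : S ≤ᵐ[μ] θ := by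
    filter_upwards [hSτ₁, hSτ₂] with ω h₁ h₂ using le_min h₁ h₂
  set B := {ω | τ₁ ω ≤ τ₂ ω}
  have hB : MeasurableSet[hθ.1.measurableSpace] B := by
    have h := hτ₁.1.measurableSet_stopping_time_le_min hτ₂.1
    simp only [WithTop.coe_le_coe] at h
    exact h
  have hτ₁_eq : B.piecewise θ τ₁ = τ₁ := by
    ext ω
    by_cases hω : ω ∈ B
    · rw [piecewise_eq_of_mem _ _ _ hω]; exact min_eq_left hω
    · rw [piecewise_eq_of_notMem _ _ _ hω]
  have hτ₂_eq : B.piecewise τ₂ θ = τ₂ := by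
    ext ω
    by_cases hω : ω ∈ B
    · rw [piecewise_eq_of_mem _ _ _ hω]
    · rw [piecewise_eq_of_notMem _ _ _ hω]; exact min_eq_right (not_le.1 hω).le
  have hφθ : μ[ψ τ₁ τ₂ | hθ.1.measurableSpace] ≤ᵐ[μ] fun ω => max (u₁ θ ω) (u₂ θ ω) := by
    have hpaste := hψ.condExp_pasting hFnull hψint hθ hτ₁ hτ₂ hθτ₁ hθτ₂ hB
    rw [hτ₁_eq, hτ₂_eq] at hpaste
    filter_upwards [hpaste, hu₁ θ hθ τ₁ ⟨hτ₁, hθτ₁⟩, hu₂ θ hθ τ₂ ⟨hτ₂, hθτ₂⟩] with ω h h₁ h₂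
    rw [h]
    by_cases hω : ω ∈ B
    · rw [piecewise_eq_of_mem _ _ _ hω]; exact h₂.trans (le_max_right _ _)
    · rw [piecewise_eq_of_notMem _ _ _ hω]; exact h₁.trans (le_max_left _ _)
  calc μ[ψ τ₁ τ₂ | hS.1.measurableSpace]
      =ᵐ[μ] μ[μ[ψ τ₁ τ₂ | hθ.1.measurableSpace] | hS.1.measurableSpace] :=
        (condExp_condExp_of_le (hS.measurableSpace_mono_of_ae_le hFnull hθ hSθ)
          hθ.1.measurableSpace_le).symm
    _ ≤ᵐ[μ] μ[fun ω => max (u₁ θ ω) (u₂ θ ω) | hS.1.measurableSpace] :=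
        condExp_mono integrable_condExp ((hu₁int θ hθ).sup (hu₂int θ hθ)) hφθ
    _ ≤ᵐ[μ] uS := huS θ ⟨hθ, hSθ⟩

end Biadmissible

theorem optimal_pair_construction_general
    {m0 : MeasurableSpace Ω} (μ : Measure Ω) [IsProbabilityMeasure μ]
    (𝓕 : Filtration ℝ m0) (T : ℝ)
    (hFnull : ∀ A : Set Ω, μ A = 0 → MeasurableSet[𝓕 0] A)
    (ψ : (Ω → ℝ) → (Ω → ℝ) → Ω → ℝ)
    (hψ : Biadmissible 𝓕 T μ ψ)
    (hψint : ∀ τ₁ τ₂, MemT0 𝓕 T τ₁ → MemT0 𝓕 T τ₂ → Integrable (ψ τ₁ τ₂) μ)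
    (S : Ω → ℝ) (hS : MemT0 𝓕 T S)
    (u₁ u₂ : (Ω → ℝ) → Ω → ℝ)
    (hu₁ : ∀ θ (hθ : MemT0 𝓕 T θ),
      IsEssSupFam μ (fun τ => MemT0 𝓕 T τ ∧ θ ≤ᵐ[μ] τ)
        (fun τ => μ[ψ τ θ | hθ.1.measurableSpace]) (u₁ θ))
    (hu₂ : ∀ θ (hθ : MemT0 𝓕 T θ),
      IsEssSupFam μ (fun τ => MemT0 𝓕 T τ ∧ θ ≤ᵐ[μ] τ)
        (fun τ => μ[ψ θ τ | hθ.1.measurableSpace]) (u₂ θ))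
    (hu₁int : ∀ θ, MemT0 𝓕 T θ → Integrable (u₁ θ) μ)
    (hu₂int : ∀ θ, MemT0 𝓕 T θ → Integrable (u₂ θ) μ)
    (vS uS : Ω → ℝ)
    (hvS : IsEssSupFam μ
      (fun p : (Ω → ℝ) × (Ω → ℝ) =>
        MemT0 𝓕 T p.1 ∧ MemT0 𝓕 T p.2 ∧ S ≤ᵐ[μ] p.1 ∧ S ≤ᵐ[μ] p.2)
      (fun p => μ[ψ p.1 p.2 | hS.1.measurableSpace]) vS)
    (huS : IsEssSupFam μ (fun θ => MemT0 𝓕 T θ ∧ S ≤ᵐ[μ] θ)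
      (fun θ => μ[fun ω => max (u₁ θ ω) (u₂ θ ω) | hS.1.measurableSpace]) uS)
    (θstar : Ω → ℝ) (hθstar : MemT0 𝓕 T θstar) (hθstarS : S ≤ᵐ[μ] θstar)
    (hu₁meas : Measurable[hθstar.1.measurableSpace] (u₁ θstar))
    (hu₂meas : Measurable[hθstar.1.measurableSpace] (u₂ θstar))
    (hopt : uS =ᵐ[μ]
      μ[fun ω => max (u₁ θstar ω) (u₂ θstar ω) | hS.1.measurableSpace])
    (θstar₁ : Ω → ℝ) (hθstar₁ : MemT0 𝓕 T θstar₁) (hθstar₁ge : θstar ≤ᵐ[μ] θstar₁)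
    (hopt₁ : u₁ θstar =ᵐ[μ] μ[ψ θstar₁ θstar | hθstar.1.measurableSpace])
    (θstar₂ : Ω → ℝ) (hθstar₂ : MemT0 𝓕 T θstar₂) (hθstar₂ge : θstar ≤ᵐ[μ] θstar₂)
    (hopt₂ : u₂ θstar =ᵐ[μ] μ[ψ θstar θstar₂ | hθstar.1.measurableSpace]) :
    MemT0 𝓕 T (fun ω => if u₁ θstar ω ≤ u₂ θstar ω then θstar ω else θstar₁ ω) ∧
    S ≤ᵐ[μ] (fun ω => if u₁ θstar ω ≤ u₂ θstar ω then θstar ω else θstar₁ ω) ∧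
    MemT0 𝓕 T (fun ω => if u₁ θstar ω ≤ u₂ θstar ω then θstar₂ ω else θstar ω) ∧
    S ≤ᵐ[μ] (fun ω => if u₁ θstar ω ≤ u₂ θstar ω then θstar₂ ω else θstar ω) ∧
    vS =ᵐ[μ]
      μ[ψ (fun ω => if u₁ θstar ω ≤ u₂ θstar ω then θstar ω else θstar₁ ω)
          (fun ω => if u₁ θstar ω ≤ u₂ θstar ω then θstar₂ ω else θstar ω) |
        hS.1.measurableSpace] := by
  set B := {ω | u₁ θstar ω ≤ u₂ θstar ω}
  have hB : MeasurableSet[hθstar.1.measurableSpace] B := measurableSet_le hu₁meas hu₂meas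
  have hθθ : θstar ≤ᵐ[μ] θstar := EventuallyLE.refl _ _
  have hτ₁ : MemT0 𝓕 T (B.piecewise θstar θstar₁) :=
    hθstar.piecewise hFnull hθstar hθstar₁ hθθ hθstar₁ge hB
  have hτ₂ : MemT0 𝓕 T (B.piecewise θstar₂ θstar) :=
    hθstar.piecewise hFnull hθstar₂ hθstar hθstar₂ge hθθ hB
  have hSτ₁ : S ≤ᵐ[μ] B.piecewise θstar θstar₁ :=
    hθstarS.trans (ae_le_piecewise hθθ hθstar₁ge)
  have hSτ₂ : S ≤ᵐ[μ] B.piecewise θstar₂ θstar :=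
    hθstarS.trans (ae_le_piecewise hθstar₂ge hθθ)
  have hattained : μ[ψ (B.piecewise θstar θstar₁) (B.piecewise θstar₂ θstar) |
      hS.1.measurableSpace] =ᵐ[μ] uS :=
    calc _ =ᵐ[μ] μ[μ[ψ (B.piecewise θstar θstar₁) (B.piecewise θstar₂ θstar) |
            hθstar.1.measurableSpace] | hS.1.measurableSpace] :=
          (condExp_condExp_of_le (hS.measurableSpace_mono_of_ae_le hFnull hθstar hθstarS)
            hθstar.1.measurableSpace_le).symm
      _ =ᵐ[μ] μ[fun ω => max (u₁ θstar ω) (u₂ θstar ω) | hS.1.measurableSpace] :=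
          condExp_congr_ae (hψ.condExp_pasting_eq_max hFnull hψint hθstar hθstar₁ hθstar₂
            hθstar₁ge hθstar₂ge hu₁meas hu₂meas hopt₁ hopt₂)
      _ =ᵐ[μ] uS := hopt.symm
  have hvu : vS ≤ᵐ[μ] uS := hvS.2 uS fun p ⟨hp₁, hp₂, hSp₁, hSp₂⟩ =>
    hψ.condExp_le_of_forall_max_le hFnull hψint (fun θ hθ => (hu₁ θ hθ).1)
      (fun θ hθ => (hu₂ θ hθ).1) hu₁int hu₂int hS huS.1 hp₁ hp₂ hSp₁ hSp₂
  have huv : uS ≤ᵐ[μ] vS := hattained.symm.le.trans (hvS.1 (_, _) ⟨hτ₁, hτ₂, hSτ₁, hSτ₂⟩)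
  exact ⟨hτ₁, hSτ₁, hτ₂, hSτ₂, (hvu.antisymm huv).trans hattained.symm⟩

/-- (Construction of optimal pairs) If `θ*` is optimal for
`u(S)`, `θ*₁` is optimal for `u₁(θ*)`, `θ*₂` is optimal for `u₂(θ*)`, and
`B = {u₁(θ*) ≤ u₂(θ*)}`, then `τ*₁ = θ* 1_B + θ*₁ 1_{Bᶜ}` and
`τ*₂ = θ*₂ 1_B + θ* 1_{Bᶜ}` are stopping times in `T_S` and
`v(S) = E[ψ(τ*₁, τ*₂) | F_S]` a.s. -/
theorem optimal_pair_construction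
    {m0 : MeasurableSpace Ω} (μ : Measure Ω) [IsProbabilityMeasure μ]
    (𝓕 : Filtration ℝ m0) (T : ℝ) (hT : 0 ≤ T)
    (hFright : ∀ t : ℝ, 𝓕 t = ⨅ s ∈ Set.Ioi t, 𝓕 s)
    (hFnull : ∀ A : Set Ω, μ A = 0 → MeasurableSet[𝓕 0] A)
    (ψ : (Ω → ℝ) → (Ω → ℝ) → Ω → ℝ)
    (hψ : Biadmissible 𝓕 T μ ψ)
    (hψint : ∀ τ₁ τ₂, MemT0 𝓕 T τ₁ → MemT0 𝓕 T τ₂ → Integrable (ψ τ₁ τ₂) μ)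
    (S : Ω → ℝ) (hS : MemT0 𝓕 T S)
    (u₁ u₂ : (Ω → ℝ) → Ω → ℝ)
    (hu₁ : ∀ θ (hθ : MemT0 𝓕 T θ),
      IsEssSupFam μ (fun τ => MemT0 𝓕 T τ ∧ θ ≤ᵐ[μ] τ)
        (fun τ => μ[ψ τ θ | hθ.1.measurableSpace]) (u₁ θ))
    (hu₂ : ∀ θ (hθ : MemT0 𝓕 T θ),
      IsEssSupFam μ (fun τ => MemT0 𝓕 T τ ∧ θ ≤ᵐ[μ] τ)
        (fun τ => μ[ψ θ τ | hθ.1.measurableSpace]) (u₂ θ))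
    (hu₁int : ∀ θ, MemT0 𝓕 T θ → Integrable (u₁ θ) μ)
    (hu₂int : ∀ θ, MemT0 𝓕 T θ → Integrable (u₂ θ) μ)
    (vS uS : Ω → ℝ)
    (hvS : IsEssSupFam μ
      (fun p : (Ω → ℝ) × (Ω → ℝ) =>
        MemT0 𝓕 T p.1 ∧ MemT0 𝓕 T p.2 ∧ S ≤ᵐ[μ] p.1 ∧ S ≤ᵐ[μ] p.2)
      (fun p => μ[ψ p.1 p.2 | hS.1.measurableSpace]) vS)
    (huS : IsEssSupFam μ (fun θ => MemT0 𝓕 T θ ∧ S ≤ᵐ[μ] θ)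
      (fun θ => μ[fun ω => max (u₁ θ ω) (u₂ θ ω) | hS.1.measurableSpace]) uS)
    (θstar : Ω → ℝ) (hθstar : MemT0 𝓕 T θstar) (hθstarS : S ≤ᵐ[μ] θstar)
    (hu₁meas : Measurable[hθstar.1.measurableSpace] (u₁ θstar))
    (hu₂meas : Measurable[hθstar.1.measurableSpace] (u₂ θstar))
    (hopt : uS =ᵐ[μ]
      μ[fun ω => max (u₁ θstar ω) (u₂ θstar ω) | hS.1.measurableSpace])
    (θstar₁ : Ω → ℝ) (hθstar₁ : MemT0 𝓕 T θstar₁) (hθstar₁ge : θstar ≤ᵐ[μ] θstar₁)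
    (hopt₁ : u₁ θstar =ᵐ[μ] μ[ψ θstar₁ θstar | hθstar.1.measurableSpace])
    (θstar₂ : Ω → ℝ) (hθstar₂ : MemT0 𝓕 T θstar₂) (hθstar₂ge : θstar ≤ᵐ[μ] θstar₂)
    (hopt₂ : u₂ θstar =ᵐ[μ] μ[ψ θstar θstar₂ | hθstar.1.measurableSpace]) :
    MemT0 𝓕 T (fun ω => if u₁ θstar ω ≤ u₂ θstar ω then θstar ω else θstar₁ ω) ∧
    S ≤ᵐ[μ] (fun ω => if u₁ θstar ω ≤ u₂ θstar ω then θstar ω else θstar₁ ω) ∧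
    MemT0 𝓕 T (fun ω => if u₁ θstar ω ≤ u₂ θstar ω then θstar₂ ω else θstar ω) ∧
    S ≤ᵐ[μ] (fun ω => if u₁ θstar ω ≤ u₂ θstar ω then θstar₂ ω else θstar ω) ∧
    vS =ᵐ[μ]
      μ[ψ (fun ω => if u₁ θstar ω ≤ u₂ θstar ω then θstar ω else θstar₁ ω)
          (fun ω => if u₁ θstar ω ≤ u₂ θstar ω then θstar₂ ω else θstar ω) |
        hS.1.measurableSpace] :=
  optimal_pair_construction_general μ 𝓕 T hFnull ψ hψ hψint S hS u₁ u₂ hu₁ hu₂ hu₁int hu₂int vS uS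
    hvS huS θstar hθstar hθstarS hu₁meas hu₂meas hopt θstar₁ hθstar₁ hθstar₁ge hopt₁ θstar₂ hθstar₂
    hθstar₂ge hopt₂
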